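/- Suppose Q = s( n⊗n − (1/3)Id + r( m⊗m − (1/3)Id ) ) with s ≥ 0, r ∈ [0,1] and (n, m) an orthonormal pair in ℝ³. Then |Q|² = (2/3) s² (r² − r + 1); if moreover Q ≠ 0, then β(Q) = 27 r² (1 − r)² / (4 (r² − r + 1)³). In particular, s ≥ √(3/2) |Q|. -/

import Mathlib

/-!
On the orthonormal lines `ℝn`, `ℝm` and `ℝ(n × m)` the tensor `Q` acts by the scalars
`s(2 - r)/3`, `s(2r - 1)/3` and `-s(1 + r)/3`, so `Q = ∑ λᵢ Pᵢ` for the complete family of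
orthogonal rank-one projections `Pᵢ` onto these lines, and `tr Qᵏ = ∑ λᵢᵏ`. As `Q` is symmetric,
`|Q|² = tr Q²`. The value of `β` is the discriminant identity
`4 (r² - r + 1)³ - (r + 1)² (2r - 1)² (r - 2)² = 27 r² (1 - r)²`, and the last claim is
`s² - (3/2) |Q|² = s² r (1 - r) ≥ 0`.
-/

open Matrix

noncomputable section

abbrev M3 : Type := Matrix (Fin 3) (Fin 3) ℝ

/-- The Frobenius norm |Q| = (∑ᵢⱼ Qᵢⱼ²)^{1/2}. -/
def frob (Q : M3) : ℝ := Real.sqrt (∑ i, ∑ j, (Q i j) ^ 2)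

/-- The biaxiality parameter β(Q) = 1 − 6 (tr Q³)² / (tr Q²)³. -/
def beta (Q : M3) : ℝ := 1 - 6 * ((Q * Q * Q).trace) ^ 2 / ((Q * Q).trace) ^ 3

section OrthogonalIdempotents

variable {R A I : Type*} [CommSemiring R] [Semiring A] [Algebra R A] [Fintype I] {e : I → A}

theorem CompleteOrthogonalIdempotents.sum_smul_pow (he : CompleteOrthogonalIdempotents e)
    (c : I → R) (k : ℕ) : (∑ i, c i • e i) ^ k = ∑ i, c i ^ k • e i := by
  classical
  induction k with
  | zero => simpa using he.complete.symm
  | succ k ih =>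
    simp only [pow_succ, ih, Finset.sum_mul_sum, smul_mul_smul_comm, he.mul_eq]
    simp

theorem CompleteOrthogonalIdempotents.trace_sum_smul_pow {d : Type*} [Fintype d] [DecidableEq d]
    {e : I → Matrix d d R} (he : CompleteOrthogonalIdempotents e) (htr : ∀ i, (e i).trace = 1)
    (c : I → R) (k : ℕ) : ((∑ i, c i • e i) ^ k).trace = ∑ i, c i ^ k := by
  simp [he.sum_smul_pow, trace_sum, htr]

end OrthogonalIdempotents

namespace Matrix

variable {d : Type*} [Fintype d]

section CommSemiring

variable {R : Type*} [CommSemiring R] {v w : d → R}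

theorem isIdempotentElem_vecMulVec_self (hv : v ⬝ᵥ v = 1) : IsIdempotentElem (vecMulVec v v) := by
  rw [IsIdempotentElem, vecMulVec_mul_vecMulVec, hv, one_smul]

theorem vecMulVec_self_mul_vecMulVec_self (hvw : v ⬝ᵥ w = 0) :
    vecMulVec v v * vecMulVec w w = 0 := by
  rw [vecMulVec_mul_vecMulVec, hvw, zero_smul]
  ext; simp [vecMulVec_apply]

theorem sum_sq_eq_trace_mul_transpose {m : Type*} [Fintype m] (A : Matrix m d R) :
    ∑ i, ∑ j, A i j ^ 2 = (A * Aᵀ).trace := by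
  simp [trace, mul_apply, sq]

end CommSemiring

section CommRing

variable {R : Type*} [DecidableEq d] [CommRing R] {v w : d → R}

def orthonormalPairFrame (v w : d → R) : Option (Fin 2) → Matrix d d R :=
  fun i => i.elim (1 - vecMulVec v v - vecMulVec w w) ![vecMulVec v v, vecMulVec w w]

theorem completeOrthogonalIdempotents_orthonormalPairFrame (hv : v ⬝ᵥ v = 1) (hw : w ⬝ᵥ w = 1)
    (hvw : v ⬝ᵥ w = 0) : CompleteOrthogonalIdempotents (orthonormalPairFrame v w) := by
  have hpair : OrthogonalIdempotents ![vecMulVec v v, vecMulVec w w] := by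
    refine ⟨Fin.forall_fin_two.2 ⟨isIdempotentElem_vecMulVec_self hv,
      isIdempotentElem_vecMulVec_self hw⟩, ?_⟩
    intro i j hij
    fin_cases i <;> fin_cases j <;> simp_all [vecMulVec_self_mul_vecMulVec_self, dotProduct_comm]
  have hframe : orthonormalPairFrame v w =
      (Option.elim · (1 - ∑ i, ![vecMulVec v v, vecMulVec w w] i)
        ![vecMulVec v v, vecMulVec w w]) := by
    funext i
    rcases i with _ | i
    · simp [orthonormalPairFrame, sub_sub]
    · rfl
  exact hframe ▸ .option hpair

theorem trace_orthonormalPairFrame_fin_three {v w : Fin 3 → R} (hv : v ⬝ᵥ v = 1)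
    (hw : w ⬝ᵥ w = 1) (i : Option (Fin 2)) : (orthonormalPairFrame v w i).trace = 1 := by
  rcases i with _ | i
  · norm_num [orthonormalPairFrame, hv, hw]
  · fin_cases i <;> simp [orthonormalPairFrame, hv, hw]

end CommRing

end Matrix

def qTensor (s r : ℝ) (n m : Fin 3 → ℝ) : M3 :=
  s • (vecMulVec n n - (1/3 : ℝ) • (1 : M3) + r • (vecMulVec m m - (1/3 : ℝ) • (1 : M3)))

def qTensorEigenvalues (s r : ℝ) : Option (Fin 2) → ℝ :=
  fun i => i.elim (-(s * (1 + r) / 3)) ![s * (2 - r) / 3, s * (2 * r - 1) / 3]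

section qTensor

variable (s r : ℝ) (n m : Fin 3 → ℝ)

theorem qTensor_eq_sum_smul_orthonormalPairFrame :
    qTensor s r n m = ∑ i, qTensorEigenvalues s r i • orthonormalPairFrame n m i := by
  simp only [qTensor, qTensorEigenvalues, orthonormalPairFrame, Fintype.sum_option,
    Fin.sum_univ_two, Option.elim, Matrix.cons_val_zero, Matrix.cons_val_one]
  module

theorem transpose_qTensor : (qTensor s r n m)ᵀ = qTensor s r n m := by
  simp [qTensor]

theorem qTensor_zero_left : qTensor 0 r n m = 0 := by
  simp [qTensor]

variable {n m}

theorem trace_qTensor_pow (hn : n ⬝ᵥ n = 1) (hm : m ⬝ᵥ m = 1) (hnm : n ⬝ᵥ m = 0) (k : ℕ) :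
    ((qTensor s r n m) ^ k).trace = ∑ i, qTensorEigenvalues s r i ^ k := by
  rw [qTensor_eq_sum_smul_orthonormalPairFrame,
    (completeOrthogonalIdempotents_orthonormalPairFrame hn hm hnm).trace_sum_smul_pow
      (trace_orthonormalPairFrame_fin_three hn hm)]

theorem trace_qTensor_sq (hn : n ⬝ᵥ n = 1) (hm : m ⬝ᵥ m = 1) (hnm : n ⬝ᵥ m = 0) :
    (qTensor s r n m * qTensor s r n m).trace = 2 / 3 * s ^ 2 * (r ^ 2 - r + 1) := by
  rw [← sq, trace_qTensor_pow s r hn hm hnm]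
  simp only [qTensorEigenvalues, Fintype.sum_option, Option.elim_none, Option.elim_some,
    Fin.sum_univ_two, cons_val_zero, cons_val_one]
  ring

theorem trace_qTensor_cube (hn : n ⬝ᵥ n = 1) (hm : m ⬝ᵥ m = 1) (hnm : n ⬝ᵥ m = 0) :
    (qTensor s r n m * qTensor s r n m * qTensor s r n m).trace
      = s ^ 3 * ((r + 1) * (2 * r - 1) * (r - 2)) / 9 := by
  rw [← pow_three', trace_qTensor_pow s r hn hm hnm]
  simp only [qTensorEigenvalues, Fintype.sum_option, Option.elim_none, Option.elim_some,
    Fin.sum_univ_two, cons_val_zero, cons_val_one]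
  ring

theorem frob_sq_qTensor (hn : n ⬝ᵥ n = 1) (hm : m ⬝ᵥ m = 1) (hnm : n ⬝ᵥ m = 0) :
    frob (qTensor s r n m) ^ 2 = 2 / 3 * s ^ 2 * (r ^ 2 - r + 1) := by
  rw [frob, Real.sq_sqrt (by positivity), sum_sq_eq_trace_mul_transpose, transpose_qTensor,
    trace_qTensor_sq s r hn hm hnm]

theorem beta_qTensor (hn : n ⬝ᵥ n = 1) (hm : m ⬝ᵥ m = 1) (hnm : n ⬝ᵥ m = 0) (hs : s ≠ 0) :
    beta (qTensor s r n m) = 27 * r ^ 2 * (1 - r) ^ 2 / (4 * (r ^ 2 - r + 1) ^ 3) := by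
  have hD : r ^ 2 - r + 1 ≠ 0 := by nlinarith [sq_nonneg (r - 1 / 2)]
  rw [beta, trace_qTensor_sq s r hn hm hnm, trace_qTensor_cube s r hn hm hnm,
    sub_eq_iff_eq_add, div_add_div _ _ (by positivity) (by positivity), eq_div_iff (by positivity)]
  ring

theorem sqrt_three_halves_mul_frob_qTensor_le (hn : n ⬝ᵥ n = 1) (hm : m ⬝ᵥ m = 1)
    (hnm : n ⬝ᵥ m = 0) (hs : 0 ≤ s) (hr0 : 0 ≤ r) (hr1 : r ≤ 1) :
    Real.sqrt (3 / 2) * frob (qTensor s r n m) ≤ s := by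
  have hfrob : 0 ≤ frob (qTensor s r n m) := Real.sqrt_nonneg _
  refine (pow_le_pow_iff_left₀ (by positivity) hs two_ne_zero).1 ?_
  rw [mul_pow, Real.sq_sqrt (show (0 : ℝ) ≤ 3 / 2 by norm_num), frob_sq_qTensor s r hn hm hnm]
  nlinarith [mul_nonneg (mul_nonneg (sq_nonneg s) hr0) (sub_nonneg.2 hr1)]

end qTensor

theorem stmt3 (s r : ℝ) (hs : 0 ≤ s) (hr0 : 0 ≤ r) (hr1 : r ≤ 1)
    (n m : Fin 3 → ℝ)
    (hn : (∑ i, n i ^ 2) = 1) (hm : (∑ i, m i ^ 2) = 1) (hnm : (∑ i, n i * m i) = 0)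
    (Q : M3)
    (hrep : Q = s • (vecMulVec n n - (1/3 : ℝ) • (1 : M3)
            + r • (vecMulVec m m - (1/3 : ℝ) • (1 : M3)))) :
    frob Q ^ 2 = (2/3) * s ^ 2 * (r ^ 2 - r + 1) ∧
    (Q ≠ 0 → beta Q = 27 * r ^ 2 * (1 - r) ^ 2 / (4 * (r ^ 2 - r + 1) ^ 3)) ∧
    Real.sqrt (3/2) * frob Q ≤ s := by
  have hn' : n ⬝ᵥ n = 1 := by simpa [dotProduct, sq] using hn
  have hm' : m ⬝ᵥ m = 1 := by simpa [dotProduct, sq] using hm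
  change Q = qTensor s r n m at hrep
  subst hrep
  refine ⟨frob_sq_qTensor s r hn' hm' hnm, fun hQ => ?_,
    sqrt_three_halves_mul_frob_qTensor_le s r hn' hm' hnm hs hr0 hr1⟩
  refine beta_qTensor s r hn' hm' hnm fun hs0 => hQ ?_
  rw [hs0, qTensor_zero_left]
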